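/- Let P, A, B, s be positive real numbers with s ≤ A / ( P·B·(A + 4B) ). Then for every C ∈ [0,1]: (1/P)·(1−C²) − s·B·( (1−C²) + 2·C·√(1−C²) ) + s·A·C² > 0. -/

import Mathlib

/-!
Put `t = √(1 - C²)`, so that `(t, C)` lies on the unit circle. Since `t² = 1 - C²`, the
expression is the binary quadratic form `(1/P - sB) t² - 2sB tC + sA C²`, and the bound on `s`
makes this form positive definite: its discriminant condition `(sB)² < (1/P - sB) sA` amounts
to `sPB(A + B) < A`, which is weaker than `sPB(A + 4B) ≤ A`.
-/

theorem binary_quadratic_pos {K : Type*} [CommRing K] [LinearOrder K] [IsStrictOrderedRing K]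
    {a b c x y : K} (ha : 0 < a) (hdisc : b ^ 2 < a * c) (hxy : x ≠ 0 ∨ y ≠ 0) :
    0 < a * x ^ 2 + 2 * b * x * y + c * y ^ 2 := by
  have hsq : a * (a * x ^ 2 + 2 * b * x * y + c * y ^ 2)
      = (a * x + b * y) ^ 2 + (a * c - b ^ 2) * y ^ 2 := by ring
  refine pos_of_mul_pos_right (hsq ▸ ?_) ha.le
  rcases eq_or_ne y 0 with rfl | hy
  · have hx : x ≠ 0 := hxy.resolve_right fun h => h rfl
    simpa using sq_pos_of_ne_zero (mul_ne_zero ha.ne' hx)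
  · exact add_pos_of_nonneg_of_pos (sq_nonneg _)
      (mul_pos (sub_pos.mpr hdisc) (sq_pos_of_ne_zero hy))

theorem rayleigh_form_posDef {P A B s : ℝ} (hP : 0 < P) (hA : 0 < A) (hB : 0 < B) (hs : 0 < s)
    (hsle : s ≤ A / (P * B * (A + 4 * B))) :
    0 < 1 / P - s * B ∧ (s * B) ^ 2 < (1 / P - s * B) * (s * A) := by
  have hsPB : 0 < s * P * B := by positivity
  have hm : s * P * B * (A + 4 * B) ≤ A := by
    rw [le_div_iff₀ (by positivity)] at hsle
    linarith
  have hdisc : s * P * B * (A + B) < A := by nlinarith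
  refine ⟨?_, ?_⟩
  · rw [sub_pos, lt_div_iff₀ hP]
    nlinarith
  · have hgap : (1 / P - s * B) * (s * A) - (s * B) ^ 2 = s / P * (A - s * P * B * (A + B)) := by
      field_simp
      ring
    have : 0 < s / P * (A - s * P * B * (A + B)) := mul_pos (by positivity) (sub_pos.mpr hdisc)
    linarith

/-- for positive reals `P, A, B, s` with `s ≤ A/(P·B·(A+4B))`, one has
`(1/P)(1−C²) − s·B((1−C²) + 2C√(1−C²)) + s·A·C² > 0` for every `C ∈ [0,1]`. -/
theorem scalar_rayleigh_lower_bound_positive (P A B s : ℝ) (hP : 0 < P) (hA : 0 < A)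
    (hB : 0 < B) (hs : 0 < s) (hsle : s ≤ A / (P * B * (A + 4 * B))) :
    ∀ C ∈ Set.Icc (0 : ℝ) 1,
      0 < (1 / P) * (1 - C ^ 2)
          - s * B * ((1 - C ^ 2) + 2 * C * Real.sqrt (1 - C ^ 2))
          + s * A * C ^ 2 := by
  rintro C ⟨hC0, hC1⟩
  set t := Real.sqrt (1 - C ^ 2)
  have ht : t ^ 2 = 1 - C ^ 2 := Real.sq_sqrt (by nlinarith)
  have htC : t ≠ 0 ∨ C ≠ 0 := by
    by_contra! h
    simp [h.1, h.2] at ht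
  obtain ⟨ha, hdisc⟩ := rayleigh_form_posDef hP hA hB hs hsle
  calc 0 < (1 / P - s * B) * t ^ 2 + 2 * -(s * B) * t * C + s * A * C ^ 2 :=
        binary_quadratic_pos ha (by rwa [neg_sq]) htC
    _ = _ := by rw [ht]; ring
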